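/- Let (Ω(S),T) be a substitution dynamical system satisfying condition (BG). Then there exist a constant L>0 and N∈ℕ such that for every n≥N and every v∈W(S) containing at least one letter of C, one has 1/L ≤ |S̃^n(ṽ)| / |S^n(v)| ≤ 1. -/

import Mathlib

open List Filter Topology MeasureTheory

namespace SubstLR

variable {A : Type*}

/-- Apply the substitution `S` to a finite word. -/
def subst (S : A → List A) (w : List A) : List A := w.flatMap S

/-- `iter S n w` is `S^n(w)`. -/
def iter (S : A → List A) (n : ℕ) (w : List A) : List A := (subst S)^[n] w

/-- The set `W(S)` of finite words associated to `S`. -/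
def WS (S : A → List A) : Set (List A) := {w | ∃ (a : A) (n : ℕ), w <:+: iter S n [a]}

/-- `w` is a finite factor of the two-sided infinite word `ω`. -/
def IsFactor (w : List A) (ω : ℤ → A) : Prop :=
  ∃ k : ℤ, w = (List.range w.length).map fun i => ω (k + i)

/-- The subshift `Ω(S)` associated to `S`. -/
def OmegaS (S : A → List A) : Set (ℤ → A) := {ω | ∀ w, IsFactor w ω → w ∈ WS S}

/-- The set `W(Ω(S))` of finite factors of elements of `Ω(S)`. -/
def WOmega (S : A → List A) : Set (List A) := {w | ∃ ω ∈ OmegaS S, IsFactor w ω}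

/-- Condition (ℓ): `|S^n(e)| → ∞`. -/
def CondL (S : A → List A) (e : A) : Prop :=
  Tendsto (fun n => (iter S n [e]).length) atTop atTop

/-- Condition (o): every letter occurs in some `S^n(e)`. -/
def CondO (S : A → List A) (e : A) : Prop := ∀ a : A, ∃ n : ℕ, a ∈ iter S n [e]

/-- Condition (c): `W(S) = W(Ω(S))`. -/
def CondC (S : A → List A) : Prop := WS S = WOmega S

/-- `(Ω(S),T)` is a substitution dynamical system. -/
def IsSubstSystem (S : A → List A) : Prop := (∃ e, CondL S e ∧ CondO S e) ∧ CondC S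

/-- `v` occurs with bounded gaps in the set of words `W`. -/
def BddGaps (v : List A) (W : Set (List A)) : Prop :=
  ∃ L : ℕ, 0 < L ∧ ∀ w ∈ W, L ≤ w.length → v <:+: w

/-- Condition (BG) for the letter `e`. -/
def BG (S : A → List A) (e : A) : Prop := CondL S e ∧ CondO S e ∧ BddGaps [e] (WS S)

/-- The shift by `k`; `shift 1` is the map `T`. -/
def shift (k : ℤ) (ω : ℤ → A) : ℤ → A := fun n => ω (n + k)

/-- `(Ω(S),T)` is minimal: every orbit is dense in `Ω(S)`. -/
def Minimal [TopologicalSpace A] (S : A → List A) : Prop :=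
  ∀ ω ∈ OmegaS S, OmegaS S ⊆ closure {ω' | ∃ k : ℤ, ω' = shift k ω}

/-- `(Ω(S),T)` is linearly repetitive. -/
def LinRep (S : A → List A) : Prop :=
  ∃ C : ℝ, 0 < C ∧ ∀ v ∈ WS S, ∀ w ∈ WS S, C * v.length ≤ (w.length : ℝ) → v <:+: w

/-- `(Ω(S),T)` is aperiodic. -/
def Aperiodic (S : A → List A) : Prop :=
  ∀ ω ∈ OmegaS S, ∀ k : ℤ, k ≠ 0 → shift k ω ≠ ω

/-- The set `B` of letters `a` with `limsup |S^n(a)| < ∞`. -/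
def Bset (S : A → List A) : Set A := {a | ∃ M : ℕ, ∀ n, (iter S n [a]).length ≤ M}

/-- The set `C = A ∖ B`. -/
def Cset (S : A → List A) : Set A := (Bset S)ᶜ

open Classical in
/-- `tilde S w` is the word obtained from `w` by deleting all letters of `B`. -/
noncomputable def tilde (S : A → List A) (w : List A) : List A :=
  w.filter fun x => decide (x ∈ Cset S)

/-- The induced substitution `S̃`. -/
noncomputable def tildeS (S : A → List A) : A → List A := fun x => tilde S (S x)

end SubstLR

/-! Letters of `C` are exactly those whose iterates never repeat, so their lengths tend to
infinity; hence, after `N` steps, `S^n(v)` is long as soon as `v` contains a letter of `C`.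
A long word of `W(S)` splits into blocks of the bounded-gap length, each containing `e`,
so it is at most `2L` times the number of its `e`'s. Since `e ∈ C` and erasing `B` commutes
with `S` (the letters of `B` only produce letters of `B`), these `e`'s survive in
`S̃^n(ṽ) = (S^n(v))~`. -/

theorem List.tendsto_length_cofinite {α : Type*} [Finite α] :
    Tendsto (List.length : List α → ℕ) cofinite atTop :=
  Nat.cofinite_eq_atTop ▸ Tendsto.cofinite_of_finite_preimage_singleton fun n =>
    (List.finite_length_eq α n).to_subtype

theorem Function.exists_lt_iterate_eq_of_iterate_add_eq {α : Type*} {f : α → α} {x : α}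
    {m p : ℕ} (hp : 0 < p) (h : f^[p + m] x = f^[m] x) (k : ℕ) :
    ∃ i < m + p, f^[k] x = f^[i] x := by
  rcases lt_or_ge k m with hk | hk
  · exact ⟨k, by omega, rfl⟩
  have hper : IsPeriodicPt f p (f^[m] x) := by
    rw [IsPeriodicPt, IsFixedPt, ← iterate_add_apply, h]
  refine ⟨(k - m) % p + m, by have := Nat.mod_lt (k - m) hp; omega, ?_⟩
  rw [iterate_add_apply, hper.iterate_mod_apply, ← iterate_add_apply, Nat.sub_add_cancel hk]

theorem List.length_le_mul_count_succ {α : Type*} [BEq α] [LawfulBEq α] (e : α) (L : ℕ)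
    (w : List α) (h : ∀ u, u <:+: w → u.length = L → e ∈ u) :
    w.length ≤ L * (w.count e + 1) := by
  by_cases hw : w.length ≤ L
  · nlinarith
  have hL : 0 < L := Nat.pos_of_ne_zero fun hL => by
    simpa using h [] nil_infix hL.symm
  have hdrop := length_le_mul_count_succ e L (w.drop L)
    fun u hu => h u (hu.trans (w.drop_suffix L).isInfix)
  have htake : e ∈ w.take L := h _ (w.take_prefix L).isInfix (by simp; omega)
  have hcount : w.count e = (w.take L).count e + (w.drop L).count e := by
    rw [← count_append, take_append_drop]
  have := count_pos_iff.2 htake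
  calc w.length = L + (w.drop L).length := by simp only [length_drop]; omega
    _ ≤ L + L * ((w.drop L).count e + 1) := by omega
    _ = L * ((w.drop L).count e + 2) := by ring
    _ ≤ L * (w.count e + 1) := Nat.mul_le_mul_left _ (by omega)
termination_by w.length
decreasing_by simp only [length_drop]; omega

theorem List.length_le_two_mul_count {α : Type*} [BEq α] [LawfulBEq α] {e : α} {L : ℕ}
    {w : List α} (h : ∀ u, u <:+: w → u.length = L → e ∈ u) (hL : L ≤ w.length) :
    w.length ≤ 2 * L * w.count e := by
  have he : e ∈ w.take L := h _ (w.take_prefix L).isInfix (by simp; omega)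
  have := count_pos_iff.2 ((w.take_prefix L).subset he)
  have := w.length_le_mul_count_succ e L h
  nlinarith

namespace SubstLR

variable {A : Type*} {S : A → List A}

theorem iter_append (n : ℕ) (u v : List A) :
    iter S n (u ++ v) = iter S n u ++ iter S n v := by
  induction n generalizing u v with
  | zero => rfl
  | succ n ih => simp only [iter, Function.iterate_succ_apply, subst, flatMap_append]; exact ih ..

theorem length_iter_singleton_le {a : A} {w : List A} (ha : a ∈ w) (n : ℕ) :
    (iter S n [a]).length ≤ (iter S n w).length := by
  obtain ⟨s, t, rfl⟩ := List.append_of_mem ha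
  rw [show s ++ a :: t = s ++ [a] ++ t by simp, iter_append, iter_append]
  simp only [length_append]
  omega

theorem iter_succ_singleton (n : ℕ) (a : A) : iter S (n + 1) [a] = iter S n (S a) := by
  simp [iter, subst]

theorem mem_Bset_of_mem_subst {a b : A} (ha : a ∈ Bset S) (hb : b ∈ S a) : b ∈ Bset S := by
  obtain ⟨M, hM⟩ := ha
  exact ⟨M, fun n => (length_iter_singleton_le hb n).trans (iter_succ_singleton n a ▸ hM (n + 1))⟩

theorem mem_Cset_of_condL {e : A} (he : CondL S e) : e ∈ Cset S := fun ⟨M, hM⟩ =>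
  (he.eventually_gt_atTop M).exists.elim fun n hn => (hM n).not_gt hn

theorem tilde_subst (w : List A) : tilde S (subst S w) = subst (tildeS S) (tilde S w) := by
  induction w with
  | nil => rfl
  | cons a w ih =>
    by_cases ha : a ∈ Cset S
    · simp_all [tilde, tildeS, subst]
    · have : tilde S (S a) = [] := by
        simp only [tilde, filter_eq_nil_iff, decide_eq_true_eq]
        exact fun b hb hbC => hbC (mem_Bset_of_mem_subst (not_not.1 ha) hb)
      simp_all [tilde, subst]

theorem tilde_iter (n : ℕ) (w : List A) :
    tilde S (iter S n w) = iter (tildeS S) n (tilde S w) := by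
  induction n generalizing w with
  | zero => rfl
  | succ n ih => simp only [iter, Function.iterate_succ_apply] at ih ⊢; rw [ih, tilde_subst]

theorem count_tilde [DecidableEq A] {e : A} (he : e ∈ Cset S) (w : List A) :
    (tilde S w).count e = w.count e := by
  unfold tilde
  exact count_filter (by simpa using he)

theorem iter_mem_WS {v : List A} (hv : v ∈ WS S) (n : ℕ) : iter S n v ∈ WS S := by
  obtain ⟨a, m, s, t, h⟩ := hv
  refine ⟨a, n + m, iter S n s, iter S n t, ?_⟩
  rw [← iter_append, ← iter_append, h, iter, iter, iter, Function.iterate_add_apply]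

theorem injective_iter_singleton {c : A} (hc : c ∈ Cset S) :
    Function.Injective fun n => iter S n [c] := by
  intro n₁ n₂ h
  by_contra hne
  wlog hlt : n₁ < n₂ generalizing n₁ n₂
  · exact this h.symm (Ne.symm hne) (by omega)
  have hrep : (subst S)^[(n₂ - n₁) + n₁] [c] = (subst S)^[n₁] [c] := by
    rw [Nat.sub_add_cancel hlt.le]; exact h.symm
  refine hc ⟨(Finset.range n₂).sup fun i => (iter S i [c]).length, fun k => ?_⟩
  obtain ⟨i, hi, hk⟩ := Function.exists_lt_iterate_eq_of_iterate_add_eq (by omega) hrep k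
  exact (congrArg length hk).le.trans
    (Finset.le_sup (f := fun i => (iter S i [c]).length) (Finset.mem_range.2 (by omega)))

theorem tendsto_length_iter_singleton [Finite A] {c : A} (hc : c ∈ Cset S) :
    Tendsto (fun n => (iter S n [c]).length) atTop atTop :=
  List.tendsto_length_cofinite.comp
    (Nat.cofinite_eq_atTop ▸ (injective_iter_singleton hc).tendsto_cofinite)

theorem length_le_two_mul_length_tilde [DecidableEq A] {e : A} (he : e ∈ Cset S) {L : ℕ}
    (hgap : ∀ w ∈ WS S, L ≤ w.length → [e] <:+: w) {w : List A} (hw : w ∈ WS S)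
    (hL : L ≤ w.length) : w.length ≤ 2 * L * (tilde S w).length := by
  have hfactor (u) (hu : u <:+: w) (huL : u.length = L) : e ∈ u := by
    obtain ⟨a, m, hwa⟩ := hw
    exact (hgap u ⟨a, m, hu.trans hwa⟩ huL.ge).subset (mem_singleton_self e)
  calc w.length ≤ 2 * L * w.count e := length_le_two_mul_count hfactor hL
    _ = 2 * L * (tilde S w).count e := by rw [count_tilde he]
    _ ≤ 2 * L * (tilde S w).length := Nat.mul_le_mul_left _ (count_le_length)

theorem statement6_general {A : Type*} [Fintype A]
    (S : A → List A) (hBG : ∃ e : A, BG S e) :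
    ∃ L : ℝ, 0 < L ∧ ∃ N : ℕ, ∀ n : ℕ, N ≤ n → ∀ v ∈ WS S, (∃ c ∈ v, c ∈ Cset S) →
      1 / L ≤ ((iter (tildeS S) n (tilde S v)).length : ℝ) / ((iter S n v).length : ℝ) ∧
      ((iter (tildeS S) n (tilde S v)).length : ℝ) / ((iter S n v).length : ℝ) ≤ 1 := by
  classical
  obtain ⟨e, hel, -, L, hL, hgap⟩ := hBG
  obtain ⟨N, hN⟩ := eventually_atTop.1 <| eventually_all.2 fun c =>
    eventually_imp_distrib_left.2 fun hc : c ∈ Cset S =>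
      (tendsto_length_iter_singleton hc).eventually_ge_atTop L
  refine ⟨2 * L, by positivity, N, fun n hn v hv ⟨c, hcv, hc⟩ => ?_⟩
  rw [← tilde_iter]
  set w := iter S n v
  have hwL : L ≤ w.length := (hN n hn c hc).trans (length_iter_singleton_le hcv n)
  have hw := length_le_two_mul_length_tilde (mem_Cset_of_condL hel) hgap (iter_mem_WS hv n) hwL
  have hw_pos : (0 : ℝ) < w.length := by exact_mod_cast hL.trans_le hwL
  constructor
  · rw [div_le_div_iff₀ (by positivity) hw_pos, one_mul, mul_comm]
    exact_mod_cast hw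
  · exact (div_le_one hw_pos).2 (by exact_mod_cast length_filter_le _ _)

/-- under (BG), there are `L > 0` and `N` such that for all `n ≥ N` and all
`v ∈ W(S)` containing a letter of `C`, one has `1/L ≤ |S̃^n(ṽ)|/|S^n(v)| ≤ 1`. -/
theorem statement6 {A : Type*} [Fintype A]
    (S : A → List A) (hS : IsSubstSystem S) (hBG : ∃ e : A, BG S e) :
    ∃ L : ℝ, 0 < L ∧ ∃ N : ℕ, ∀ n : ℕ, N ≤ n → ∀ v ∈ WS S, (∃ c ∈ v, c ∈ Cset S) →
      1 / L ≤ ((iter (tildeS S) n (tilde S v)).length : ℝ) / ((iter S n v).length : ℝ) ∧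
      ((iter (tildeS S) n (tilde S v)).length : ℝ) / ((iter S n v).length : ℝ) ≤ 1 :=
  statement6_general S hBG

end SubstLR
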